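/- (Strong Optimal Termination) Let s_{0:T} achieve V(s_0,T) and let K = min{k : μ_{s_t} = μ_{s_k} for all k ≤ t ≤ T} be its terminal step. Then μ_{s_t} < μ_{s_K} for all t < K. -/

import Mathlib

open Finset
open scoped ENNReal

/-- A path `p` is admissible up to time `T` if consecutive nodes are adjacent. -/
def Adm {S : Type*} (adj : S → S → Prop) (p : ℕ → S) (T : ℕ) : Prop :=
  ∀ t < T, adj (p t) (p (t + 1))

/-- Cumulative expected reward of the path `p 0, p 1, ..., p T`. -/
noncomputable def Vpath {S : Type*} (μ : S → ℝ) (p : ℕ → S) (T : ℕ) : ℝ :=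
  ∑ t ∈ Finset.range (T + 1), μ (p t)

/-- Optimal `T`-step cumulative expected reward starting from node `s`. -/
noncomputable def Vopt {S : Type*} (adj : S → S → Prop) (μ : S → ℝ) (s : S) (T : ℕ) : ℝ :=
  sSup {v | ∃ p : ℕ → S, p 0 = s ∧ Adm adj p T ∧ Vpath μ p T = v}

/-- Infinite-horizon undiscounted regret (total cost) of a stationary policy `π`
starting from node `s`, as a limit (`tsum` of the nonnegative costs). -/
noncomputable def Rinf {S : Type*} (μ : S → ℝ) (μstar : ℝ) (π : S → S) (s : S) : ℝ≥0∞ :=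
  ∑' t : ℕ, ENNReal.ofReal (μstar - μ (π^[t] s))

/-- The sufficient planning horizon `T_G = ⌈D μ* / Δ⌉`. -/
noncomputable def TG (D : ℕ) (μstar Δ : ℝ) : ℕ :=
  Nat.ceil ((D : ℝ) * μstar / Δ)

/-!
Suppose some node before `K` had reward at least `μ (p K)`, and let `m < K` be a step of
maximal reward among the steps before `K`. Then `p m` dominates every later node of the path,
so the path that follows `p` up to step `m` and then stays at `p m` (a self-loop) collects at
least as much reward. Optimality of `p` forces equality, hence the reward is constant from `m`
on, contradicting the minimality of `K`.
-/

section GraphBandit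

variable {S : Type*} {adj : S → S → Prop} {μ : S → ℝ} {p : ℕ → S} {T : ℕ}

theorem Adm.comp_min (hrefl : ∀ s, adj s s) (hadm : Adm adj p T) (m : ℕ) :
    Adm adj (fun t => p (min t m)) T := by
  intro t ht
  rcases lt_or_ge t m with htm | hmt
  · simpa [min_eq_left htm.le, min_eq_left (Nat.succ_le_of_lt htm)] using hadm t ht
  · simpa [min_eq_right hmt, min_eq_right (hmt.trans t.le_succ)] using hrefl (p m)

theorem Vpath_le_Vopt [Finite S] {s : S} (hp0 : p 0 = s) (hadm : Adm adj p T) :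
    Vpath μ p T ≤ Vopt adj μ s T := by
  obtain ⟨B, hB⟩ := (Set.finite_range μ).bddAbove
  refine le_csSup ⟨(T + 1) • B, ?_⟩ ⟨p, hp0, hadm, rfl⟩
  rintro v ⟨r, -, -, rfl⟩
  simpa [Vpath] using
    sum_le_card_nsmul (range (T + 1)) _ B fun t _ => hB (Set.mem_range_self (r t))

theorem optimal_path_reward_const_of_dominates [Finite S] (hrefl : ∀ s, adj s s)
    (hadm : Adm adj p T) (hopt : Vpath μ p T = Vopt adj μ (p 0) T) (m : ℕ)
    (hdom : ∀ t, m ≤ t → t ≤ T → μ (p t) ≤ μ (p m)) :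
    ∀ t, m ≤ t → t ≤ T → μ (p t) = μ (p m) := by
  have hterm_nonpos : ∀ t ∈ range (T + 1), μ (p t) - μ (p (min t m)) ≤ 0 := fun t ht => by
    rcases le_total t m with htm | hmt
    · simp [min_eq_left htm]
    · simpa [min_eq_right hmt] using hdom t hmt (Nat.lt_succ_iff.mp (mem_range.mp ht))
  have hsum_nonneg : 0 ≤ ∑ t ∈ range (T + 1), (μ (p t) - μ (p (min t m))) := by
    have := Vpath_le_Vopt (μ := μ) (s := p 0) (by simp) (hadm.comp_min hrefl m)
    rw [← hopt, Vpath, Vpath] at this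
    rw [sum_sub_distrib]
    linarith
  have hterm_zero := (sum_eq_zero_iff_of_nonpos hterm_nonpos).mp
    (le_antisymm (sum_nonpos hterm_nonpos) hsum_nonneg)
  intro t hmt htT
  have := hterm_zero t (mem_range.mpr (Nat.lt_succ_of_le htT))
  rw [min_eq_right hmt] at this
  linarith

end GraphBandit

theorem strong_optimal_termination_general {S : Type*} [Fintype S]
    (adj : S → S → Prop) (hrefl : ∀ s, adj s s)
    (μ : S → ℝ) (T : ℕ) (s0 : S) (p : ℕ → S)
    (hp0 : p 0 = s0) (hadm : Adm adj p T)
    (hopt : Vpath μ p T = Vopt adj μ s0 T)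
    (K : ℕ)
    (hKterm : ∀ t, K ≤ t → t ≤ T → μ (p t) = μ (p K))
    (hKmin : ∀ k < K, ¬ (∀ t, k ≤ t → t ≤ T → μ (p t) = μ (p k))) :
    ∀ t < K, μ (p t) < μ (p K) := by
  by_contra! ⟨t₀, ht₀K, ht₀⟩
  obtain ⟨m, hmK, hmax⟩ := exists_max_image (range K) (μ ∘ p) ⟨t₀, mem_range.mpr ht₀K⟩
  refine hKmin m (mem_range.mp hmK) (optimal_path_reward_const_of_dominates hrefl hadm
    (hp0 ▸ hopt) m fun t _ htT => ?_)
  rcases lt_or_ge t K with htK | hKt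
  · exact hmax t (mem_range.mpr htK)
  · exact (hKterm t hKt htT).trans_le (ht₀.trans (hmax t₀ (mem_range.mpr ht₀K)))

/-- Strong Optimal Termination: on an optimal path, all nodes strictly before
the terminal step `K` have mean reward strictly below `μ (p K)`. -/
theorem strong_optimal_termination {S : Type*} [Fintype S] [Nonempty S]
    (adj : S → S → Prop) (hrefl : ∀ s, adj s s) (hsymm : ∀ s t, adj s t → adj t s)
    (μ : S → ℝ) (T : ℕ) (s0 : S) (p : ℕ → S)
    (hp0 : p 0 = s0) (hadm : Adm adj p T)
    (hopt : Vpath μ p T = Vopt adj μ s0 T)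
    (K : ℕ) (hKT : K ≤ T)
    (hKterm : ∀ t, K ≤ t → t ≤ T → μ (p t) = μ (p K))
    (hKmin : ∀ k < K, ¬ (∀ t, k ≤ t → t ≤ T → μ (p t) = μ (p k))) :
    ∀ t < K, μ (p t) < μ (p K) :=
  strong_optimal_termination_general adj hrefl μ T s0 p hp0 hadm hopt K hKterm hKmin
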